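/- arXiv:1009.4852 — 6 statements merged into one kernel-verified Lean document; each statement's English description precedes it below -/
import Mathlib

section
/- Let κ>1, p̄≥1, C≥1 and γ>0. Suppose f is a μ-measurable function on U₁ such that |f|_{L_{βκ}(U_{σ'})} ≤ (C(1+β)^γ/(σ−σ')^γ)^{1/β} · |f|_{L_β(U_σ)} for all 0<σ'<σ≤1 and all β>0. Then there exist a constant M depending only on C, γ, κ, p̄ and a constant γ₀ depending only on γ and κ such that for all δ∈(0,1) and all p∈(0,p̄] one has ess sup_{U_δ}|f| ≤ (M/(1−δ)^{γ₀})^{1/p} · |f|_{L_p(U₁)}. -/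
/-!
Put `σₙ = δ + (1 - δ) / 2ⁿ` and `qₙ = p κⁿ`. The hypothesis with `β = qₙ`, applied between
`σₙ` and any `σ' ≤ σₙ₊₁` (namely `σₙ₊₁` and `δ`), bounds the `L^{qₙ₊₁}(U_σ')` norm by
`(E rⁿ)^{1/qₙ}` times the `L^{qₙ}(U_σₙ)` norm, with `E = C (2(1 + p̄)/(1 - δ))^γ` and
`r = (2κ)^γ`. Since `∑ κ⁻ᵏ` and `∑ k κ⁻ᵏ` converge, the accumulated factor
`∏ (E rᵏ)^{κ⁻ᵏ/p}` stays bounded, so the `L^{qₙ}(U_δ)` norms of `f` are bounded uniformly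
in `n`; by Chebyshev's inequality such a bound along exponents `qₙ → ∞` bounds the essential
supremum.
-/

open MeasureTheory Filter Topology Finset

lemma le_prod_mul_of_le_mul {N a : ℕ → ℝ} (ha : ∀ n, 0 ≤ a n)
    (h : ∀ n, N (n + 1) ≤ a n * N n) (n : ℕ) : N n ≤ (∏ k ∈ range n, a k) * N 0 := by
  induction n with
  | zero => simp
  | succ n ih =>
    calc N (n + 1) ≤ a n * N n := h n
      _ ≤ a n * ((∏ k ∈ range n, a k) * N 0) := mul_le_mul_of_nonneg_left ih (ha n)
      _ = (∏ k ∈ range (n + 1), a k) * N 0 := by rw [prod_range_succ]; ring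

lemma prod_mul_pow_rpow_geometric_le {ρ E r : ℝ} (hρ0 : 0 ≤ ρ) (hρ1 : ρ < 1) (hE : 1 ≤ E)
    (hr : 1 ≤ r) (n : ℕ) :
    ∏ k ∈ range n, (E * r ^ k) ^ ρ ^ k ≤ E ^ (1 - ρ)⁻¹ * r ^ (ρ / (1 - ρ) ^ 2) := by
  have hρ : ‖ρ‖ < 1 := by rwa [Real.norm_of_nonneg hρ0]
  have hsplit : ∀ k : ℕ, (E * r ^ k) ^ ρ ^ k = E ^ ρ ^ k * r ^ ((k : ℝ) * ρ ^ k) := fun k => by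
    rw [Real.mul_rpow (by positivity) (by positivity), Real.rpow_natCast_mul (by positivity)]
  rw [prod_congr rfl fun k _ => hsplit k, prod_mul_distrib,
    ← Real.rpow_sum_of_pos (by positivity), ← Real.rpow_sum_of_pos (by positivity)]
  gcongr
  · exact sum_le_hasSum _ (fun k _ => by positivity) (hasSum_geometric_of_lt_one hρ0 hρ1)
  · exact sum_le_hasSum _ (fun k _ => by positivity) (hasSum_coe_mul_geometric_of_norm_lt_one hρ)

section EssSup

variable {X : Type*} [MeasurableSpace X] {ν : Measure X} {f : X → ℝ}

lemma mul_measureReal_rpow_le_integral_rpow {q t : ℝ} (hq : 0 < q) (ht : 0 ≤ t)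
    (hint : Integrable (fun x => |f x| ^ q) ν) :
    t * ν.real {x | t ≤ |f x|} ^ (1 / q) ≤ (∫ x, |f x| ^ q ∂ν) ^ (1 / q) := by
  have hset : {x | t ^ q ≤ |f x| ^ q} = {x | t ≤ |f x|} := by
    ext x
    exact Real.rpow_le_rpow_iff ht (abs_nonneg _) hq
  have hmarkov := mul_meas_ge_le_integral_of_nonneg
    (ae_of_all _ fun x => Real.rpow_nonneg (abs_nonneg (f x)) q) hint (t ^ q)
  rw [hset] at hmarkov
  calc t * ν.real {x | t ≤ |f x|} ^ (1 / q)
      = (t ^ q * ν.real {x | t ≤ |f x|}) ^ (1 / q) := by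
        rw [Real.mul_rpow (by positivity) measureReal_nonneg, ← Real.rpow_mul ht,
          mul_one_div_cancel hq.ne', Real.rpow_one]
    _ ≤ (∫ x, |f x| ^ q ∂ν) ^ (1 / q) := by gcongr

lemma measure_le_abs_eq_zero_of_integral_rpow_le [IsFiniteMeasure ν] (hf : Measurable f)
    {a K t : ℝ} (ha : ∀ᵐ x ∂ν, |f x| ≤ a) (hK : 0 ≤ K) (hKt : K < t) {q : ℕ → ℝ}
    (hq_pos : ∀ n, 0 < q n) (hq : Tendsto q atTop atTop)
    (h : ∀ n, (∫ x, |f x| ^ q n ∂ν) ^ (1 / q n) ≤ K) :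
    ν {x | t ≤ |f x|} = 0 := by
  by_contra hm
  have hm0 : 0 < ν.real {x | t ≤ |f x|} := ENNReal.toReal_pos hm (measure_ne_top _ _)
  have hint : ∀ n, Integrable (fun x => |f x| ^ q n) ν := fun n =>
    Integrable.of_bound (hf.abs.pow_const _).aestronglyMeasurable (a ^ q n) <| by
      filter_upwards [ha] with x hx
      rw [Real.norm_of_nonneg (by positivity)]
      exact Real.rpow_le_rpow (abs_nonneg _) hx (hq_pos n).le
  have hlim : Tendsto (fun n => t * ν.real {x | t ≤ |f x|} ^ (1 / q n)) atTop (𝓝 t) := by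
    have h1q : Tendsto (fun n => 1 / q n) atTop (𝓝 0) := tendsto_const_nhds.div_atTop hq
    simpa using ((Real.continuousAt_const_rpow hm0.ne').tendsto.comp h1q).const_mul t
  exact hKt.not_ge <| le_of_tendsto hlim <| Eventually.of_forall fun n =>
    (mul_measureReal_rpow_le_integral_rpow (hq_pos n) (hK.trans hKt.le) (hint n)).trans (h n)

lemma essSup_abs_le_of_integral_rpow_le [IsFiniteMeasure ν] (hf : Measurable f) {K : ℝ}
    (hK : 0 ≤ K) {q : ℕ → ℝ} (hq_pos : ∀ n, 0 < q n) (hq : Tendsto q atTop atTop)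
    (h : ∀ n, (∫ x, |f x| ^ q n ∂ν) ^ (1 / q n) ≤ K) :
    essSup (fun x => |f x|) ν ≤ K := by
  rcases eq_zero_or_neZero ν with rfl | hν
  · simpa [essSup, limsup, limsSup, Real.sInf_univ] using hK
  by_cases hbdd : IsBoundedUnder (· ≤ ·) (ae ν) (fun x => |f x|)
  swap
  -- the essential supremum of an essentially unbounded function is the junk value `0`
  · rwa [essSup, Real.limsup_of_not_isBoundedUnder hbdd]
  obtain ⟨a, ha⟩ := hbdd
  refine le_of_forall_pos_le_add fun ε hε => limsup_le_of_le
    (isCoboundedUnder_le_of_le _ fun x => abs_nonneg (f x)) ?_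
  have hnull := measure_le_abs_eq_zero_of_integral_rpow_le hf ha hK (lt_add_of_pos_right K hε)
    hq_pos hq h
  filter_upwards [measure_eq_zero_iff_ae_notMem.mp hnull] with x hx
  exact (not_le.mp hx).le

end EssSup

namespace MoserIteration

variable {X : Type*} [MeasurableSpace X]

/-- `|f|_{L_p(s)}`; when `|f| ^ p` is not integrable on `s` this is the junk value `0`. -/
noncomputable def setLpNorm (μ : Measure X) (s : Set X) (f : X → ℝ) (p : ℝ) : ℝ :=
  (∫ x in s, |f x| ^ p ∂μ) ^ (1 / p)

lemma setLpNorm_nonneg (μ : Measure X) (s : Set X) (f : X → ℝ) (p : ℝ) :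
    0 ≤ setLpNorm μ s f p :=
  Real.rpow_nonneg (integral_nonneg fun _ => Real.rpow_nonneg (abs_nonneg _) _) _

def IterationInequality (μ : Measure X) (U : ℝ → Set X) (f : X → ℝ) (κ C γ : ℝ) : Prop :=
  ∀ σ' σ β : ℝ, 0 < σ' → σ' < σ → σ ≤ 1 → 0 < β →
    setLpNorm μ (U σ') f (β * κ) ≤
      (C * (1 + β) ^ γ / (σ - σ') ^ γ) ^ (1 / β) * setLpNorm μ (U σ) f β

noncomputable def radius (δ : ℝ) (n : ℕ) : ℝ := δ + (1 - δ) / 2 ^ n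

lemma radius_zero (δ : ℝ) : radius δ 0 = 1 := by simp [radius]

lemma le_radius {δ : ℝ} (hδ : δ ≤ 1) (n : ℕ) : δ ≤ radius δ n := by
  unfold radius
  have : 0 ≤ (1 - δ) / 2 ^ n := div_nonneg (by linarith) (by positivity)
  linarith

lemma radius_le_one {δ : ℝ} (hδ : δ ≤ 1) (n : ℕ) : radius δ n ≤ 1 := by
  unfold radius
  have : (1 - δ) / 2 ^ n ≤ 1 - δ := div_le_self (by linarith) (one_le_pow₀ one_le_two)
  linarith

lemma radius_sub_radius_succ (δ : ℝ) (n : ℕ) :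
    radius δ n - radius δ (n + 1) = (1 - δ) / 2 ^ (n + 1) := by
  unfold radius
  field_simp
  ring

lemma iteration_factor_le {C γ κ δ p pbar : ℝ} (hC : 0 ≤ C) (hγ : 0 ≤ γ) (hκ : 1 ≤ κ)
    (hδ : δ < 1) (hp : 0 ≤ p) (hpp : p ≤ pbar) (n : ℕ) {s : ℝ}
    (hs : (1 - δ) / 2 ^ (n + 1) ≤ s) :
    C * (1 + p * κ ^ n) ^ γ / s ^ γ ≤ C * (2 * (1 + pbar) / (1 - δ)) ^ γ * ((2 * κ) ^ γ) ^ n := by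
  have h1δ : 0 < 1 - δ := by linarith
  have hs0 : 0 < s := lt_of_lt_of_le (by positivity) hs
  have hpbar : 0 ≤ pbar := hp.trans hpp
  have hκn : 1 ≤ κ ^ n := one_le_pow₀ hκ
  have hbase : (1 + p * κ ^ n) / s ≤ 2 * (1 + pbar) / (1 - δ) * (2 * κ) ^ n :=
    calc (1 + p * κ ^ n) / s ≤ (1 + pbar) * κ ^ n / ((1 - δ) / 2 ^ (n + 1)) := by
          gcongr
          nlinarith [mul_le_mul_of_nonneg_right hpp (zero_le_one.trans hκn)]
      _ = 2 * (1 + pbar) / (1 - δ) * (2 * κ) ^ n := by field_simp; ring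
  calc C * (1 + p * κ ^ n) ^ γ / s ^ γ = C * ((1 + p * κ ^ n) / s) ^ γ := by
        rw [Real.div_rpow (by positivity) hs0.le, mul_div_assoc]
    _ ≤ C * (2 * (1 + pbar) / (1 - δ) * (2 * κ) ^ n) ^ γ := by gcongr
    _ = C * (2 * (1 + pbar) / (1 - δ)) ^ γ * ((2 * κ) ^ γ) ^ n := by
        rw [Real.mul_rpow (by positivity) (by positivity), Real.rpow_pow_comm (by positivity),
          mul_assoc]

variable {μ : Measure X} {U : ℝ → Set X} {f : X → ℝ} {κ C γ δ p pbar : ℝ}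

lemma setLpNorm_le_of_le_radius_succ (hiter : IterationInequality μ U f κ C γ) (hC : 0 ≤ C)
    (hγ : 0 ≤ γ) (hκ : 1 ≤ κ) (hδ : δ < 1) (hp : 0 < p) (hpp : p ≤ pbar) (n : ℕ) {σ' : ℝ}
    (hσ'0 : 0 < σ') (hσ' : σ' ≤ radius δ (n + 1)) :
    setLpNorm μ (U σ') f (p * κ ^ (n + 1)) ≤
      (C * (2 * (1 + pbar) / (1 - δ)) ^ γ * ((2 * κ) ^ γ) ^ n) ^ (1 / (p * κ ^ n)) *
        setLpNorm μ (U (radius δ n)) f (p * κ ^ n) := by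
  have hgap : (1 - δ) / 2 ^ (n + 1) ≤ radius δ n - σ' := by
    linarith [radius_sub_radius_succ δ n]
  have hσ : σ' < radius δ n := by
    have : 0 < (1 - δ) / 2 ^ (n + 1) := div_pos (by linarith) (by positivity)
    linarith
  have hstep := hiter σ' (radius δ n) (p * κ ^ n) hσ'0 hσ (radius_le_one hδ.le n)
    (by positivity)
  rw [mul_assoc, ← pow_succ] at hstep
  refine hstep.trans (mul_le_mul_of_nonneg_right ?_ (setLpNorm_nonneg _ _ _ _))
  gcongr
  exact iteration_factor_le hC hγ hκ hδ hp.le hpp n hgap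

lemma setLpNorm_le_of_iterationInequality (hiter : IterationInequality μ U f κ C γ) (hC : 1 ≤ C)
    (hγ : 0 ≤ γ) (hκ : 1 < κ) (hδ0 : 0 < δ) (hδ1 : δ < 1) (hp : 0 < p) (hpp : p ≤ pbar)
    (n : ℕ) :
    setLpNorm μ (U δ) f (p * κ ^ (n + 1)) ≤
      ((C * (2 * (1 + pbar)) ^ γ) ^ (1 - κ⁻¹)⁻¹ * ((2 * κ) ^ γ) ^ (κ⁻¹ / (1 - κ⁻¹) ^ 2) /
        (1 - δ) ^ (γ * (1 - κ⁻¹)⁻¹)) ^ (1 / p) * setLpNorm μ (U 1) f p := by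
  set E := C * (2 * (1 + pbar) / (1 - δ)) ^ γ
  set a : ℕ → ℝ := fun k => (E * ((2 * κ) ^ γ) ^ k) ^ (1 / (p * κ ^ k))
  have h1δ : 0 < 1 - δ := by linarith
  have hpbar : 0 ≤ pbar := hp.le.trans hpp
  have hE : 1 ≤ E := by
    have : 1 ≤ 2 * (1 + pbar) / (1 - δ) := by
      rw [one_le_div h1δ]
      linarith
    exact one_le_mul_of_one_le_of_one_le hC (Real.one_le_rpow this hγ)
  have hr : 1 ≤ (2 * κ) ^ γ := Real.one_le_rpow (by linarith) hγ
  have ha : ∀ k, a k = ((E * ((2 * κ) ^ γ) ^ k) ^ κ⁻¹ ^ k) ^ (1 / p) := fun k => by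
    rw [← Real.rpow_mul (by positivity), inv_pow, ← div_eq_inv_mul, div_div]
  have hstep : ∀ k {σ'}, 0 < σ' → σ' ≤ radius δ (k + 1) →
      setLpNorm μ (U σ') f (p * κ ^ (k + 1)) ≤ a k * setLpNorm μ (U (radius δ k)) f (p * κ ^ k) :=
    fun k _ hσ'0 hσ' => setLpNorm_le_of_le_radius_succ hiter (by linarith) hγ hκ.le hδ1 hp hpp
      k hσ'0 hσ'
  have hchain := le_prod_mul_of_le_mul (N := fun k => setLpNorm μ (U (radius δ k)) f (p * κ ^ k))
    (fun k => by positivity) fun k => hstep k (hδ0.trans_le (le_radius hδ1.le _)) le_rfl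
  have hprod : ∏ k ∈ range (n + 1), a k ≤
      (E ^ (1 - κ⁻¹)⁻¹ * ((2 * κ) ^ γ) ^ (κ⁻¹ / (1 - κ⁻¹) ^ 2)) ^ (1 / p) := by
    simp_rw [ha]
    rw [Real.finsetProd_rpow _ _ fun k _ => by positivity]
    gcongr
    exact prod_mul_pow_rpow_geometric_le (by positivity) (inv_lt_one_of_one_lt₀ hκ) hE hr _
  have hconst : E ^ (1 - κ⁻¹)⁻¹ = (C * (2 * (1 + pbar)) ^ γ) ^ (1 - κ⁻¹)⁻¹ /
      (1 - δ) ^ (γ * (1 - κ⁻¹)⁻¹) := by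
    simp only [E]
    rw [Real.div_rpow (by positivity) h1δ.le, ← mul_div_assoc, Real.div_rpow (by positivity)
      (by positivity), Real.rpow_mul h1δ.le]
  calc setLpNorm μ (U δ) f (p * κ ^ (n + 1))
      ≤ a n * setLpNorm μ (U (radius δ n)) f (p * κ ^ n) :=
        hstep n hδ0 (le_radius hδ1.le _)
    _ ≤ a n * ((∏ k ∈ range n, a k) * setLpNorm μ (U (radius δ 0)) f (p * κ ^ 0)) := by
        gcongr
        exact hchain n
    _ = (∏ k ∈ range (n + 1), a k) * setLpNorm μ (U 1) f p := by
        rw [prod_range_succ, radius_zero, pow_zero, mul_one]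
        ring
    _ ≤ _ := by
        rw [mul_div_right_comm, ← hconst]
        gcongr
        exact setLpNorm_nonneg _ _ _ _

end MoserIteration

theorem moser_iteration_sup_general (κ pbar C γ : ℝ) (hκ : 1 < κ)
    (hC : 1 ≤ C) (hγ : 0 < γ) :
    ∃ M γ₀ : ℝ,
      ∀ (X : Type) (_ : MeasurableSpace X) (μ : Measure X), IsFiniteMeasure μ →
      ∀ U : ℝ → Set X,
        (∀ σ' σ : ℝ, 0 < σ' → σ' ≤ σ → σ ≤ 1 → U σ' ⊆ U σ) →
      ∀ f : X → ℝ, Measurable f →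
        (∀ σ' σ β : ℝ, 0 < σ' → σ' < σ → σ ≤ 1 → 0 < β →
          (∫ x in U σ', |f x| ^ (β * κ) ∂μ) ^ (1 / (β * κ)) ≤
            (C * (1 + β) ^ γ / (σ - σ') ^ γ) ^ (1 / β) *
              (∫ x in U σ, |f x| ^ β ∂μ) ^ (1 / β)) →
      ∀ δ ∈ Set.Ioo (0:ℝ) 1, ∀ p ∈ Set.Ioc (0:ℝ) pbar,
        essSup (fun x => |f x|) (μ.restrict (U δ)) ≤
          (M / (1 - δ) ^ γ₀) ^ (1 / p) *
            (∫ x in U (1:ℝ), |f x| ^ p ∂μ) ^ (1 / p) := by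
  refine ⟨(C * (2 * (1 + pbar)) ^ γ) ^ (1 - κ⁻¹)⁻¹ * ((2 * κ) ^ γ) ^ (κ⁻¹ / (1 - κ⁻¹) ^ 2),
    γ * (1 - κ⁻¹)⁻¹, ?_⟩
  intro X _ μ _ U _ f hf hiter δ ⟨hδ0, hδ1⟩ p ⟨hp, hpp⟩
  have hκ0 : 0 < κ := zero_lt_one.trans hκ
  have hpbar : 0 ≤ pbar := hp.le.trans hpp
  refine essSup_abs_le_of_integral_rpow_le hf ?_ (q := fun n => p * κ ^ (n + 1))
    (fun n => by positivity) ?_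
    (MoserIteration.setLpNorm_le_of_iterationInequality hiter hC hγ.le hκ hδ0 hδ1 hp hpp)
  · exact mul_nonneg (by positivity) (MoserIteration.setLpNorm_nonneg _ _ _ _)
  · exact (tendsto_pow_atTop_atTop_of_one_lt hκ).comp (tendsto_add_atTop_nat 1)
      |>.const_mul_atTop hp

/-- Moser iteration, first form: from the reverse-Hölder type iteration
inequality one obtains an essential supremum bound on `U δ`. -/
theorem moser_iteration_sup (κ pbar C γ : ℝ) (hκ : 1 < κ) (hpbar : 1 ≤ pbar)
    (hC : 1 ≤ C) (hγ : 0 < γ) :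
    ∃ M γ₀ : ℝ,
      ∀ (X : Type) (_ : MeasurableSpace X) (μ : Measure X), IsFiniteMeasure μ →
      ∀ U : ℝ → Set X,
        (∀ σ' σ : ℝ, 0 < σ' → σ' ≤ σ → σ ≤ 1 → U σ' ⊆ U σ) →
      ∀ f : X → ℝ, Measurable f →
        (∀ σ' σ β : ℝ, 0 < σ' → σ' < σ → σ ≤ 1 → 0 < β →
          (∫ x in U σ', |f x| ^ (β * κ) ∂μ) ^ (1 / (β * κ)) ≤
            (C * (1 + β) ^ γ / (σ - σ') ^ γ) ^ (1 / β) *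
              (∫ x in U σ, |f x| ^ β ∂μ) ^ (1 / β)) →
      ∀ δ ∈ Set.Ioo (0:ℝ) 1, ∀ p ∈ Set.Ioc (0:ℝ) pbar,
        essSup (fun x => |f x|) (μ.restrict (U δ)) ≤
          (M / (1 - δ) ^ γ₀) ^ (1 / p) *
            (∫ x in U (1:ℝ), |f x| ^ p ∂μ) ^ (1 / p) :=
  moser_iteration_sup_general κ pbar C γ hκ hC hγ
end

section
/- Assume μ(U₁) ≤ 1. Let κ>1, 0<p₀<κ, C≥1 and γ>0. Suppose f is a μ-measurable function on U₁ such that |f|_{L_{βκ}(U_{σ'})} ≤ (C/(σ−σ')^γ)^{1/β} · |f|_{L_β(U_σ)} for all 0<σ'<σ≤1 and all β with 0<β≤p₀/κ (note p₀/κ<1). Then there exist a constant M depending only on C, γ, κ and a constant γ₀ depending only on γ and κ such that for all δ∈(0,1) and all p∈(0,p₀/κ] one has |f|_{L_{p₀}(U_δ)} ≤ (M/(1−δ)^{γ₀})^{1/p−1/p₀} · |f|_{L_p(U₁)}. -/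
/-!
Iterate the reverse Hölder inequality downwards from `p₀` through the exponents `p₀ / κ ^ i`,
on radii increasing from `δ` to `1` whose `i`-th gap is proportional to `2 ^ i`. The `i`-th step
costs a factor `(C (1 - δ)^{-γ} 2^{γ (N - i)})^{κ^{i+1}/p₀}`; since `∑ κ^i` and `∑ (N - i) κ^i`
are both `O(κ^N)`, the product of `N` steps is `F ^ (c κ^N / p₀)` with `F` independent of `N`.
Stopping at the first `N` with `p₀ / κ ^ N ≤ p` makes `κ^N / p₀ ≲ 1/p ≲ 1/p - 1/p₀`, and the
remaining `L_{p₀/κ^N}` norm on `U 1` is at most the `L_p` norm because `μ (U 1) ≤ 1`.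
-/

open MeasureTheory Finset

section LpMonotone
variable {X : Type*} [MeasurableSpace X] {μ : Measure X} {f : X → ℝ} {q r : ℝ}

lemma integrable_abs_rpow_iff_memLp (hf : AEStronglyMeasurable f μ) (hr : 0 < r) :
    Integrable (fun x => |f x| ^ r) μ ↔ MemLp f (ENNReal.ofReal r) μ := by
  have h := integrable_norm_rpow_iff hf (by simpa using hr) ENNReal.ofReal_ne_top
  rwa [ENNReal.toReal_ofReal hr.le] at h

lemma Integrable.abs_rpow_of_le [IsFiniteMeasure μ] (hf : AEStronglyMeasurable f μ) (hq : 0 < q)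
    (hqr : q ≤ r) (h : Integrable (fun x => |f x| ^ r) μ) : Integrable (fun x => |f x| ^ q) μ :=
  (integrable_abs_rpow_iff_memLp hf hq).2
    (((integrable_abs_rpow_iff_memLp hf (hq.trans_le hqr)).1 h).mono_exponent
      (ENNReal.ofReal_le_ofReal hqr))

lemma integral_abs_rpow_rpow_le (hμ : μ Set.univ ≤ 1) (hf : AEStronglyMeasurable f μ) (hq : 0 < q)
    (hqr : q ≤ r) (hint : Integrable (fun x => |f x| ^ r) μ) :
    (∫ x, |f x| ^ q ∂μ) ^ (1 / q) ≤ (∫ x, |f x| ^ r ∂μ) ^ (1 / r) := by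
  have : IsFiniteMeasure μ := ⟨hμ.trans_lt ENNReal.one_lt_top⟩
  have hr : 0 < r := hq.trans_le hqr
  replace hf := (integrable_abs_rpow_iff_memLp hf hr).1 hint
  have hqr' : ENNReal.ofReal q ≤ ENNReal.ofReal r := ENNReal.ofReal_le_ofReal hqr
  have hle := (eLpNorm_le_eLpNorm_mul_rpow_measure_univ hqr' hf.aestronglyMeasurable).trans
    (mul_le_of_le_one_right' (ENNReal.rpow_le_one hμ ?_))
  · rw [(hf.mono_exponent hqr').eLpNorm_eq_integral_rpow_norm (by simpa using hq)
        ENNReal.ofReal_ne_top,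
      hf.eLpNorm_eq_integral_rpow_norm (by simpa using hr) ENNReal.ofReal_ne_top,
      ENNReal.ofReal_le_ofReal_iff (by positivity), ENNReal.toReal_ofReal hq.le,
      ENNReal.toReal_ofReal hr.le] at hle
    simpa only [Real.norm_eq_abs, one_div] using hle
  · rw [ENNReal.toReal_ofReal hq.le, ENNReal.toReal_ofReal hr.le, sub_nonneg]
    exact one_div_le_one_div_of_le hq hqr

end LpMonotone

section GeometricSums
variable {κ : ℝ}

lemma sum_range_pow_succ_le (hκ : 1 < κ) (N : ℕ) :
    ∑ i ∈ range N, κ ^ (i + 1) ≤ κ ^ (N + 1) / (κ - 1) := by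
  have hκ1 : 0 < κ - 1 := sub_pos.2 hκ
  simp_rw [pow_succ, ← sum_mul, geom_sum_eq hκ.ne' N]
  rw [div_mul_eq_mul_div]
  gcongr
  linarith

lemma sum_range_sub_mul_pow_succ_le (hκ : 1 < κ) (N : ℕ) :
    ∑ i ∈ range N, ((N - i : ℕ) : ℝ) * κ ^ (i + 1) ≤ κ ^ (N + 2) / (κ - 1) ^ 2 := by
  have hκ1 : 0 < κ - 1 := sub_pos.2 hκ
  induction N with
  | zero => rw [sum_range_zero]; positivity
  | succ N ih =>
    have hsplit : ∑ i ∈ range (N + 1), ((N + 1 - i : ℕ) : ℝ) * κ ^ (i + 1)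
        = ∑ i ∈ range N, ((N - i : ℕ) : ℝ) * κ ^ (i + 1) + ∑ i ∈ range (N + 1), κ ^ (i + 1) := by
      rw [sum_range_succ, sum_range_succ (fun i => κ ^ (i + 1)), Nat.add_sub_cancel_left,
        Nat.cast_one, one_mul, ← add_assoc, ← sum_add_distrib]
      congr 1
      refine sum_congr rfl fun i hi => ?_
      rw [Nat.sub_add_comm (mem_range.1 hi).le]
      push_cast
      ring
    have hgeom : κ ^ (N + 2) / (κ - 1) ^ 2 + κ ^ (N + 2) / (κ - 1) = κ ^ (N + 3) / (κ - 1) ^ 2 := by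
      field_simp
      ring
    rw [hsplit, ← hgeom]
    exact add_le_add ih (sum_range_pow_succ_le hκ (N + 1))

lemma prod_range_mul_pow_rpow_le (hκ : 1 < κ) {A B p₀ : ℝ} (hA : 1 ≤ A) (hB : 1 ≤ B)
    (hp₀ : 0 < p₀) (N : ℕ) :
    ∏ i ∈ range N, (A * B ^ (N - i)) ^ (κ ^ (i + 1) / p₀)
      ≤ (A * B ^ (κ / (κ - 1))) ^ (κ / (κ - 1) * κ ^ N / p₀) := by
  have hκ1 : 0 < κ - 1 := sub_pos.2 hκ
  have hA0 : 0 < A := by linarith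
  have hB0 : 0 < B := by linarith
  have hsplit : ∏ i ∈ range N, (A * B ^ (N - i)) ^ (κ ^ (i + 1) / p₀)
      = A ^ ((∑ i ∈ range N, κ ^ (i + 1)) / p₀)
        * B ^ ((∑ i ∈ range N, ((N - i : ℕ) : ℝ) * κ ^ (i + 1)) / p₀) := by
    rw [sum_div, sum_div, Real.rpow_sum_of_pos hA0, Real.rpow_sum_of_pos hB0, ← prod_mul_distrib]
    refine prod_congr rfl fun i _ => ?_
    rw [Real.mul_rpow hA0.le (by positivity), ← Real.rpow_natCast B (N - i),
      ← Real.rpow_mul hB0.le, mul_div_assoc]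
  have hS₁ : (∑ i ∈ range N, κ ^ (i + 1)) / p₀ ≤ κ / (κ - 1) * κ ^ N / p₀ := by
    gcongr
    calc _ ≤ κ ^ (N + 1) / (κ - 1) := sum_range_pow_succ_le hκ N
      _ = _ := by rw [pow_succ]; ring
  have hS₂ : (∑ i ∈ range N, ((N - i : ℕ) : ℝ) * κ ^ (i + 1)) / p₀
      ≤ κ / (κ - 1) * (κ / (κ - 1) * κ ^ N / p₀) := by
    rw [← mul_div_assoc, ← mul_assoc]
    gcongr
    calc _ ≤ κ ^ (N + 2) / (κ - 1) ^ 2 := sum_range_sub_mul_pow_succ_le hκ N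
      _ = _ := by rw [pow_add]; field_simp
  rw [hsplit, Real.mul_rpow hA0.le (by positivity), ← Real.rpow_mul hB0.le]
  exact mul_le_mul (Real.rpow_le_rpow_of_exponent_le hA hS₁)
    (Real.rpow_le_rpow_of_exponent_le hB hS₂) (by positivity) (by positivity)

lemma one_div_le_mul_sub_one_div {p p₀ : ℝ} (hκ : 1 < κ) (hp : 0 < p) (hpκ : p * κ ≤ p₀) :
    1 / p ≤ κ / (κ - 1) * (1 / p - 1 / p₀) := by
  have hκ1 : 0 < κ - 1 := sub_pos.2 hκ
  have h : 1 / p₀ ≤ 1 / (p * κ) := one_div_le_one_div_of_le (by positivity) hpκ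
  rw [div_mul_eq_mul_div, le_div_iff₀ hκ1]
  calc 1 / p * (κ - 1) = κ * (1 / p - 1 / (p * κ)) := by field_simp
    _ ≤ κ * (1 / p - 1 / p₀) := by gcongr

lemma exists_ne_zero_le_div_pow_and_div_pow_succ_le {p p₀ : ℝ} (hκ : 1 < κ) (hp : 0 < p)
    (hpκ : p ≤ p₀ / κ) : ∃ n ≠ 0, p ≤ p₀ / κ ^ n ∧ p₀ / κ ^ (n + 1) ≤ p := by
  have hκ0 : 0 < κ := by linarith
  have hκp : κ ≤ p₀ / p := by rwa [le_div_iff₀ hp, mul_comm, ← le_div_iff₀ hκ0]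
  obtain ⟨n, hn_le, hn_lt⟩ := exists_nat_pow_near (by linarith) hκ
  refine ⟨n, ?_, ?_, ?_⟩
  · rintro rfl
    rw [zero_add, pow_one] at hn_lt
    linarith
  · rwa [le_div_iff₀ (by positivity), mul_comm, ← le_div_iff₀ hp]
  · rw [div_le_iff₀ (by positivity), mul_comm, ← div_le_iff₀ hp]
    exact hn_lt.le

lemma div_mul_pow_succ_div_le {p p₀ : ℝ} {n : ℕ} (hκ : 1 < κ) (hp : 0 < p) (hp₀ : 0 < p₀)
    (hpκ : p ≤ p₀ / κ) (hpn : p ≤ p₀ / κ ^ n) :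
    κ / (κ - 1) * κ ^ (n + 1) / p₀ ≤ κ * (κ / (κ - 1)) ^ 2 * (1 / p - 1 / p₀) := by
  have hκ0 : 0 < κ := by linarith
  have hκ1 : 0 < κ - 1 := by linarith
  calc κ / (κ - 1) * κ ^ (n + 1) / p₀ ≤ κ / (κ - 1) * (κ * (1 / p)) := by
        rw [mul_div_assoc]
        gcongr
        rw [div_le_iff₀ hp₀, pow_succ, mul_comm (κ ^ n)]
        rw [le_div_iff₀ (by positivity), mul_comm, ← le_div_iff₀ hp] at hpn
        calc κ * κ ^ n ≤ κ * (p₀ / p) := by gcongr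
          _ = κ * (1 / p) * p₀ := by ring
    _ ≤ κ / (κ - 1) * (κ * (κ / (κ - 1) * (1 / p - 1 / p₀))) := by
        gcongr
        exact one_div_le_mul_sub_one_div hκ hp (by rwa [le_div_iff₀ hκ0] at hpκ)
    _ = κ * (κ / (κ - 1)) ^ 2 * (1 / p - 1 / p₀) := by ring

end GeometricSums

lemma one_le_div_one_sub_rpow {C γ δ : ℝ} (hC : 1 ≤ C) (hγ : 0 ≤ γ) (hδ0 : 0 ≤ δ) (hδ1 : δ < 1) :
    1 ≤ C / (1 - δ) ^ γ := by
  rw [le_div_iff₀ (by bound), one_mul]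
  exact (Real.rpow_le_one (by linarith) (by linarith) hγ).trans hC

lemma le_prod_mul_of_forall_le_mul {a c : ℕ → ℝ} {N : ℕ} (hc : ∀ i < N, 0 ≤ c i)
    (h : ∀ i < N, a i ≤ c i * a (i + 1)) : a 0 ≤ (∏ i ∈ range N, c i) * a N := by
  induction N with
  | zero => simp
  | succ N ih =>
    calc a 0 ≤ (∏ i ∈ range N, c i) * a N :=
          ih (fun i hi => hc i (by omega)) (fun i hi => h i (by omega))
      _ ≤ (∏ i ∈ range N, c i) * (c N * a (N + 1)) :=
          mul_le_mul_of_nonneg_left (h N N.lt_succ_self)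
            (prod_nonneg fun i hi => hc i ((mem_range.1 hi).trans N.lt_succ_self))
      _ = (∏ i ∈ range (N + 1), c i) * a (N + 1) := by rw [prod_range_succ, mul_assoc]

/-- The gaps grow like `2 ^ i`, so the large exponents `κ ^ (i + 1)` of the late steps meet the
large gaps. -/
noncomputable def moserRadius (δ : ℝ) (N i : ℕ) : ℝ := δ + (1 - δ) * (2 ^ i - 1) / (2 ^ N - 1)

section MoserRadius
variable {δ : ℝ} {N : ℕ}

lemma two_pow_sub_one_pos (hN : N ≠ 0) : (0 : ℝ) < 2 ^ N - 1 :=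
  sub_pos.2 (one_lt_pow₀ one_lt_two hN)

lemma moserRadius_zero : moserRadius δ N 0 = δ := by simp [moserRadius]

lemma moserRadius_self (hN : N ≠ 0) : moserRadius δ N N = 1 := by
  simp [moserRadius, (two_pow_sub_one_pos hN).ne']

lemma moserRadius_succ_sub (i : ℕ) :
    moserRadius δ N (i + 1) - moserRadius δ N i = (1 - δ) * 2 ^ i / (2 ^ N - 1) := by
  simp only [moserRadius, pow_succ]
  ring

lemma strictMono_moserRadius (hδ : δ < 1) (hN : N ≠ 0) : StrictMono (moserRadius δ N) := by
  have := two_pow_sub_one_pos hN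
  have : 0 < 1 - δ := by linarith
  refine strictMono_nat_of_lt_succ fun i => ?_
  rw [← sub_pos, moserRadius_succ_sub]
  positivity

lemma div_moserRadius_succ_sub_rpow_le {C γ : ℝ} (hC : 0 ≤ C) (hγ : 0 ≤ γ) (hδ : δ < 1) {i : ℕ}
    (hi : i < N) :
    C / (moserRadius δ N (i + 1) - moserRadius δ N i) ^ γ ≤ C / (1 - δ) ^ γ * (2 ^ γ) ^ (N - i) := by
  have h1δ : 0 < 1 - δ := by linarith
  have hgap : (1 - δ) / 2 ^ (N - i) ≤ moserRadius δ N (i + 1) - moserRadius δ N i := by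
    have := two_pow_sub_one_pos (Nat.ne_zero_of_lt hi)
    calc (1 - δ) / 2 ^ (N - i) = (1 - δ) * 2 ^ i / 2 ^ N := by
          rw [← pow_sub_mul_pow 2 hi.le]; field_simp
      _ ≤ _ := by rw [moserRadius_succ_sub]; gcongr; linarith
  calc C / (moserRadius δ N (i + 1) - moserRadius δ N i) ^ γ
      ≤ C / ((1 - δ) / 2 ^ (N - i)) ^ γ := by gcongr
    _ = C / (1 - δ) ^ γ * (2 ^ γ) ^ (N - i) := by
        rw [Real.div_rpow h1δ.le (by positivity), Real.rpow_pow_comm zero_le_two]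
        field_simp

end MoserRadius

section Moser
variable {X : Type*} [MeasurableSpace X] {μ : Measure X} {f : X → ℝ} {U : ℝ → Set X}
  {κ p₀ C γ : ℝ}

/-- `‖f‖_{L_β(s)}`; it is `0` when `|f| ^ β` is not integrable on `s`. -/
noncomputable def lpNormOn (μ : Measure X) (f : X → ℝ) (s : Set X) (β : ℝ) : ℝ :=
  (∫ x in s, |f x| ^ β ∂μ) ^ (1 / β)

def ReverseHolder (μ : Measure X) (f : X → ℝ) (U : ℝ → Set X) (κ p₀ C γ : ℝ) : Prop :=
  ∀ σ' σ β : ℝ, 0 < σ' → σ' < σ → σ ≤ 1 → 0 < β → β ≤ p₀ / κ →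
    lpNormOn μ f (U σ') (β * κ) ≤ (C / (σ - σ') ^ γ) ^ (1 / β) * lpNormOn μ f (U σ) β

lemma lpNormOn_nonneg (μ : Measure X) (f : X → ℝ) (s : Set X) (β : ℝ) : 0 ≤ lpNormOn μ f s β :=
  Real.rpow_nonneg (integral_nonneg fun _ => by positivity) _

lemma ReverseHolder.lpNormOn_le_prod_mul (h : ReverseHolder μ f U κ p₀ C γ) (hκ : 1 ≤ κ)
    (hp₀ : 0 < p₀) (hC : 0 ≤ C) {σ : ℕ → ℝ} (hσ : StrictMono σ) (hσ0 : 0 < σ 0) {N : ℕ}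
    (hσN : σ N ≤ 1) :
    lpNormOn μ f (U (σ 0)) p₀ ≤
      (∏ i ∈ range N, (C / (σ (i + 1) - σ i) ^ γ) ^ (κ ^ (i + 1) / p₀)) *
        lpNormOn μ f (U (σ N)) (p₀ / κ ^ N) := by
  have hκ0 : 0 < κ := zero_lt_one.trans_le hκ
  have key := le_prod_mul_of_forall_le_mul (a := fun i => lpNormOn μ f (U (σ i)) (p₀ / κ ^ i))
    (c := fun i => (C / (σ (i + 1) - σ i) ^ γ) ^ (κ ^ (i + 1) / p₀)) (N := N)
    (fun i _ => Real.rpow_nonneg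
      (div_nonneg hC (Real.rpow_nonneg (sub_pos.2 (hσ i.lt_succ_self)).le _)) _)
    (fun i hi => ?_)
  · simpa using key
  have hstep := h (σ i) (σ (i + 1)) (p₀ / κ ^ (i + 1)) (hσ0.trans_le (hσ.monotone i.zero_le))
    (hσ i.lt_succ_self) ((hσ.monotone hi).trans hσN) (by positivity)
    (div_le_div_of_nonneg_left hp₀.le hκ0 (le_self_pow₀ hκ i.succ_ne_zero))
  have hexp : p₀ / κ ^ (i + 1) * κ = p₀ / κ ^ i := by rw [pow_succ]; field_simp
  rwa [hexp, one_div_div] at hstep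

lemma ReverseHolder.lpNormOn_le_rpow_mul (h : ReverseHolder μ f U κ p₀ C γ) (hκ : 1 < κ)
    (hp₀ : 0 < p₀) (hC : 1 ≤ C) (hγ : 0 ≤ γ) {δ : ℝ} (hδ0 : 0 < δ) (hδ1 : δ < 1) {N : ℕ}
    (hN : N ≠ 0) :
    lpNormOn μ f (U δ) p₀ ≤
      (C / (1 - δ) ^ γ * (2 ^ γ) ^ (κ / (κ - 1))) ^ (κ / (κ - 1) * κ ^ N / p₀) *
        lpNormOn μ f (U 1) (p₀ / κ ^ N) := by
  have hA := one_le_div_one_sub_rpow hC hγ hδ0.le hδ1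
  have hB : 1 ≤ (2 : ℝ) ^ γ := Real.one_le_rpow one_le_two hγ
  have hσ := strictMono_moserRadius hδ1 hN
  have hc : ∀ i, 0 ≤ C / (moserRadius δ N (i + 1) - moserRadius δ N i) ^ γ := fun i =>
    div_nonneg (by linarith) (Real.rpow_nonneg (sub_nonneg.2 (hσ.monotone i.le_succ)) _)
  have hchain := h.lpNormOn_le_prod_mul hκ.le hp₀ (by linarith) hσ (by rwa [moserRadius_zero])
    (moserRadius_self hN).le
  rw [moserRadius_zero, moserRadius_self hN] at hchain
  refine hchain.trans (mul_le_mul_of_nonneg_right ?_ (lpNormOn_nonneg _ _ _ _))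
  refine (prod_le_prod (fun i _ => Real.rpow_nonneg (hc i) _) fun i hi => ?_).trans
    (prod_range_mul_pow_rpow_le hκ hA hB hp₀ N)
  exact Real.rpow_le_rpow (hc i)
    (div_moserRadius_succ_sub_rpow_le (by linarith) hγ hδ1 (mem_range.1 hi)) (by positivity)

lemma ReverseHolder.lpNormOn_le_rpow_sub_mul (h : ReverseHolder μ f U κ p₀ C γ) (hκ : 1 < κ)
    (hp₀ : 0 < p₀) (hC : 1 ≤ C) (hγ : 0 ≤ γ) {δ : ℝ} (hδ0 : 0 < δ) (hδ1 : δ < 1)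
    (hμ : μ (U 1) ≤ 1) (hf : AEStronglyMeasurable f (μ.restrict (U 1))) {p : ℝ} (hp : 0 < p)
    (hpκ : p ≤ p₀ / κ) (hint : Integrable (fun x => |f x| ^ p) (μ.restrict (U 1))) :
    lpNormOn μ f (U δ) p₀ ≤
      (C / (1 - δ) ^ γ * (2 ^ γ) ^ (κ / (κ - 1))) ^ (κ * (κ / (κ - 1)) ^ 2 * (1 / p - 1 / p₀)) *
        lpNormOn μ f (U 1) p := by
  obtain ⟨n, -, hpn, hlast⟩ := exists_ne_zero_le_div_pow_and_div_pow_succ_le hκ hp hpκ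
  have hF : 1 ≤ C / (1 - δ) ^ γ * (2 ^ γ) ^ (κ / (κ - 1)) :=
    one_le_mul_of_one_le_of_one_le (one_le_div_one_sub_rpow hC hγ hδ0.le hδ1)
      (Real.one_le_rpow (Real.one_le_rpow one_le_two hγ) (div_nonneg (by linarith) (by linarith)))
  refine (h.lpNormOn_le_rpow_mul hκ hp₀ hC hγ hδ0 hδ1 n.succ_ne_zero).trans ?_
  gcongr ?_ * ?_
  · exact lpNormOn_nonneg _ _ _ _
  · exact Real.rpow_le_rpow_of_exponent_le hF (div_mul_pow_succ_div_le hκ hp hp₀ hpκ hpn)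
  · exact integral_abs_rpow_rpow_le (by rwa [Measure.restrict_apply_univ]) hf (by positivity)
      hlast hint

lemma ReverseHolder.lpNormOn_eq_zero_of_not_integrable [IsFiniteMeasure μ]
    (h : ReverseHolder μ f U κ p₀ C γ) (hκ : 1 < κ) (hp₀ : 0 < p₀) (hC : 1 ≤ C) (hγ : 0 ≤ γ)
    {δ : ℝ} (hδ0 : 0 < δ) (hδ1 : δ < 1) (hf : AEStronglyMeasurable f (μ.restrict (U 1)))
    {p : ℝ} (hp : 0 < p) (hpκ : p ≤ p₀ / κ)
    (hint : ¬Integrable (fun x => |f x| ^ p) (μ.restrict (U 1))) :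
    lpNormOn μ f (U δ) p₀ = 0 := by
  obtain ⟨n, hn, hpn, -⟩ := exists_ne_zero_le_div_pow_and_div_pow_succ_le hκ hp hpκ
  have hzero : lpNormOn μ f (U 1) (p₀ / κ ^ n) = 0 := by
    rw [lpNormOn, integral_undef (mt (Integrable.abs_rpow_of_le hf hp hpn) hint), Real.zero_rpow]
    positivity
  refine le_antisymm ?_ (lpNormOn_nonneg _ _ _ _)
  simpa [hzero] using h.lpNormOn_le_rpow_mul hκ hp₀ hC hγ hδ0 hδ1 hn

end Moser

theorem moser_iteration_Lp_general (κ p₀ C γ : ℝ) (hκ : 1 < κ) (hp₀ : 0 < p₀)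
    (hC : 1 ≤ C) (hγ : 0 < γ) :
    ∃ M γ₀ : ℝ,
      ∀ (X : Type) (_ : MeasurableSpace X) (μ : Measure X), IsFiniteMeasure μ →
      ∀ U : ℝ → Set X,
        (∀ σ' σ : ℝ, 0 < σ' → σ' ≤ σ → σ ≤ 1 → U σ' ⊆ U σ) →
      μ (U 1) ≤ 1 →
      ∀ f : X → ℝ, Measurable f →
        (∀ σ' σ β : ℝ, 0 < σ' → σ' < σ → σ ≤ 1 → 0 < β → β ≤ p₀ / κ →
          (∫ x in U σ', |f x| ^ (β * κ) ∂μ) ^ (1 / (β * κ)) ≤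
            (C / (σ - σ') ^ γ) ^ (1 / β) *
              (∫ x in U σ, |f x| ^ β ∂μ) ^ (1 / β)) →
      ∀ δ ∈ Set.Ioo (0:ℝ) 1, ∀ p ∈ Set.Ioc (0:ℝ) (p₀ / κ),
        (∫ x in U δ, |f x| ^ p₀ ∂μ) ^ (1 / p₀) ≤
          (M / (1 - δ) ^ γ₀) ^ (1 / p - 1 / p₀) *
            (∫ x in U (1:ℝ), |f x| ^ p ∂μ) ^ (1 / p) := by
  refine ⟨(C * (2 ^ γ) ^ (κ / (κ - 1))) ^ (κ * (κ / (κ - 1)) ^ 2),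
    γ * (κ * (κ / (κ - 1)) ^ 2), ?_⟩
  intro X _ μ _ U _ hμ f hf hstep δ ⟨hδ0, hδ1⟩ p ⟨hp, hpκ⟩
  have h : ReverseHolder μ f U κ p₀ C γ := hstep
  show lpNormOn μ f (U δ) p₀ ≤ _ * lpNormOn μ f (U 1) p
  by_cases hint : Integrable (fun x => |f x| ^ p) (μ.restrict (U 1))
  · refine (h.lpNormOn_le_rpow_sub_mul hκ hp₀ hC hγ.le hδ0 hδ1 hμ hf.aestronglyMeasurable hp hpκ
      hint).trans_eq ?_
    rw [Real.rpow_mul (by positivity), div_mul_eq_mul_div,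
      Real.div_rpow (by positivity) (by positivity), ← Real.rpow_mul (sub_pos.2 hδ1).le]
  · rw [h.lpNormOn_eq_zero_of_not_integrable hκ hp₀ hC hγ.le hδ0 hδ1 hf.aestronglyMeasurable hp
      hpκ hint]
    exact mul_nonneg (Real.rpow_nonneg (by positivity) _) (lpNormOn_nonneg _ _ _ _)

/-- Moser iteration, second form: from the iteration inequality for small
exponents one obtains an `L_{p₀}` bound on `U δ` in terms of the `L_p` norm
on `U 1`, provided `μ(U 1) ≤ 1`. -/
theorem moser_iteration_Lp (κ p₀ C γ : ℝ) (hκ : 1 < κ) (hp₀ : 0 < p₀)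
    (hp₀κ : p₀ < κ) (hC : 1 ≤ C) (hγ : 0 < γ) :
    ∃ M γ₀ : ℝ,
      ∀ (X : Type) (_ : MeasurableSpace X) (μ : Measure X), IsFiniteMeasure μ →
      ∀ U : ℝ → Set X,
        (∀ σ' σ : ℝ, 0 < σ' → σ' ≤ σ → σ ≤ 1 → U σ' ⊆ U σ) →
      μ (U 1) ≤ 1 →
      ∀ f : X → ℝ, Measurable f →
        (∀ σ' σ β : ℝ, 0 < σ' → σ' < σ → σ ≤ 1 → 0 < β → β ≤ p₀ / κ →
          (∫ x in U σ', |f x| ^ (β * κ) ∂μ) ^ (1 / (β * κ)) ≤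
            (C / (σ - σ') ^ γ) ^ (1 / β) *
              (∫ x in U σ, |f x| ^ β ∂μ) ^ (1 / β)) →
      ∀ δ ∈ Set.Ioo (0:ℝ) 1, ∀ p ∈ Set.Ioc (0:ℝ) (p₀ / κ),
        (∫ x in U δ, |f x| ^ p₀ ∂μ) ^ (1 / p₀) ≤
          (M / (1 - δ) ^ γ₀) ^ (1 / p - 1 / p₀) *
            (∫ x in U (1:ℝ), |f x| ^ p ∂μ) ^ (1 / p) :=
  moser_iteration_Lp_general κ p₀ C γ hκ hp₀ hC hγ
end

section
/- (Fundamental identity for integro-differential operators.) Let T>0, let k:[0,T]→ℝ be continuously differentiable, let H∈C¹(ℝ), and let u:[0,T]→ℝ be continuously differentiable. Then for every t∈(0,T] one has H'(u(t))·(d/dt)(k∗u)(t) = (d/dt)(k∗(H∘u))(t) + (−H(u(t)) + H'(u(t))u(t))·k(t) + ∫₀^t (H(u(t−s)) − H(u(t)) − H'(u(t))[u(t−s)−u(t)])·(−k'(s)) ds. -/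
open MeasureTheory intervalIntegral

/-! Differentiating under the integral sign with variable upper limit gives
`d/dt (k ∗ f)(t) = k(0) f(t) + ∫₀ᵗ k'(s) f(t - s) ds` for every continuous `f`. Applied to
`f = u` and `f = H ∘ u`, the identity becomes linear algebra in the two integrals
`∫₀ᵗ k'(s) u(t - s) ds`, `∫₀ᵗ k'(s) H(u(t - s)) ds` together with `∫₀ᵗ k' = k(t) - k(0)`. -/

open Metric Function Asymptotics Filter Topology

theorem hasDerivAt_zero_of_norm_sub_le_mul_sq {E : Type*} [NormedAddCommGroup E]
    [NormedSpace ℝ E] {f : ℝ → E} {t C : ℝ}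
    (h : ∀ᶠ r in 𝓝 t, ‖f r - f t‖ ≤ C * ‖r - t‖ ^ 2) : HasDerivAt f 0 t := by
  rw [hasDerivAt_iff_isLittleO]
  simp only [smul_zero, sub_zero]
  refine (IsBigO.of_bound C ?_).trans_isLittleO (isLittleO_pow_sub_sub t one_lt_two)
  simpa only [norm_pow, norm_norm] using h

theorem hasDerivAt_integral_of_continuous_partial {E : Type*} [NormedAddCommGroup E]
    [NormedSpace ℝ E] [CompleteSpace E] {G G' : ℝ → ℝ → E}
    (hG : Continuous (uncurry G)) (hG' : Continuous (uncurry G'))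
    (hderiv : ∀ r τ, HasDerivAt (G · τ) (G' r τ) r) (a t : ℝ) :
    HasDerivAt (fun r => ∫ τ in a..r, G r τ) (G t t + ∫ τ in a..t, G' t τ) t := by
  set B := closedBall t (dist a t + 1)
  have hball : ball t 1 ⊆ B := ball_subset_closedBall.trans
    (closedBall_subset_closedBall (by linarith [dist_nonneg (x := a) (y := t)]))
  obtain ⟨L, hL⟩ := ((isCompact_closedBall t _).prod (isCompact_closedBall t _)
    ).exists_bound_of_continuousOn (s := B ×ˢ B) hG'.continuousOn
  have hlipschitz : ∀ τ ∈ B, ∀ r ∈ B, ‖G r τ - G t τ‖ ≤ L * ‖r - t‖ := fun τ hτ r hr =>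
    (convex_closedBall t _).norm_image_sub_le_of_norm_hasDerivWithin_le
      (fun x _ => (hderiv x τ).hasDerivWithinAt) (fun x hx => hL (x, τ) ⟨hx, hτ⟩)
      (mem_closedBall_self (by positivity)) hr
  have hcont : ∀ r, Continuous (G r) := fun r => hG.comp (Continuous.prodMk_right r)
  have hP : HasDerivAt (fun r => ∫ τ in a..r, G t τ) (G t t) t :=
    ((hcont t).integral_hasStrictDerivAt a t).hasDerivAt
  have hQ : HasDerivAt (fun r => ∫ τ in a..t, G r τ) (∫ τ in a..t, G' t τ) t := by
    refine (hasDerivAt_integral_of_dominated_loc_of_deriv_le (bound := fun _ => L)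
      (ball_mem_nhds t one_pos) (Eventually.of_forall fun r => (hcont r).aestronglyMeasurable)
      ((hcont t).intervalIntegrable _ _)
      (hG'.comp (Continuous.prodMk_right t)).aestronglyMeasurable
      (ae_of_all _ fun τ hτ r hr => hL (r, τ) ⟨hball hr, ?_⟩) intervalIntegrable_const
      (ae_of_all _ fun τ _ r _ => hderiv r τ)).2
    rw [mem_closedBall]
    linarith [Real.dist_right_le_of_mem_uIcc (Set.uIoc_subset_uIcc hτ)]
  have hR : HasDerivAt (fun r => ∫ τ in t..r, (G r τ - G t τ)) 0 t := by
    refine hasDerivAt_zero_of_norm_sub_le_mul_sq (C := L) ?_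
    filter_upwards [ball_mem_nhds t one_pos] with r hr
    rw [integral_same, sub_zero]
    calc ‖∫ τ in t..r, (G r τ - G t τ)‖ ≤ L * ‖r - t‖ * |r - t| := by
          refine norm_integral_le_of_norm_le_const fun τ hτ =>
            hlipschitz τ (hball ?_) r (hball hr)
          rw [mem_ball, dist_comm] at hr ⊢
          exact (Real.dist_left_le_of_mem_uIcc (Set.uIoc_subset_uIcc hτ)).trans_lt hr
      _ = L * ‖r - t‖ ^ 2 := by rw [Real.norm_eq_abs]; ring
  have hsplit : (fun r => ∫ τ in a..r, G r τ) = fun r => (∫ τ in a..r, G t τ) +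
      ((∫ τ in a..t, G r τ) - ∫ τ in a..t, G t τ) + ∫ τ in t..r, (G r τ - G t τ) := by
    funext r
    have hi : ∀ s b c, IntervalIntegrable (G s) volume b c := fun s _ _ =>
      (hcont s).intervalIntegrable _ _
    rw [integral_sub (hi _ _ _) (hi _ _ _),
      ← integral_add_adjacent_intervals (hi r a t) (hi r t r),
      ← integral_add_adjacent_intervals (hi t a t) (hi t t r)]
    abel
  rw [hsplit]
  exact ((hP.add (hQ.sub_const _)).add hR).congr_deriv (by rw [add_zero])

theorem hasDerivAt_integral_comp_sub_mul {k f : ℝ → ℝ} (hk : ContDiff ℝ 1 k) (hf : Continuous f)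
    (t : ℝ) :
    HasDerivAt (fun r => ∫ τ in (0:ℝ)..r, k (r - τ) * f τ)
      (k 0 * f t + ∫ s in (0:ℝ)..t, deriv k s * f (t - s)) t := by
  have hk' := hk.continuous_deriv le_rfl
  have hkd : ∀ x, HasDerivAt k (deriv k x) x := fun x =>
    (hk.differentiable one_ne_zero x).hasDerivAt
  have hleibniz := hasDerivAt_integral_of_continuous_partial
    (G := fun r τ => k (r - τ) * f τ) (G' := fun r τ => deriv k (r - τ) * f τ)
    (by fun_prop) (by fun_prop)
    (fun r τ => ((hkd (r - τ)).comp_sub_const r τ).mul_const (f τ)) 0 t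
  have hflip : ∫ τ in (0:ℝ)..t, deriv k (t - τ) * f τ =
      ∫ s in (0:ℝ)..t, deriv k s * f (t - s) := by
    simpa only [sub_sub_cancel, sub_self, sub_zero] using
      integral_comp_sub_left (fun s => deriv k s * f (t - s)) (a := 0) (b := t) t
  rwa [sub_self, hflip] at hleibniz

theorem integral_sub_sub_mul_neg_deriv {k v w : ℝ → ℝ} (hk : ContDiff ℝ 1 k)
    (hv : Continuous v) (hw : Continuous w) (c t : ℝ) :
    ∫ s in (0:ℝ)..t, (w (t - s) - w t - c * (v (t - s) - v t)) * -deriv k s =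
      (w t - c * v t) * (k t - k 0) + c * (∫ s in (0:ℝ)..t, deriv k s * v (t - s))
        - ∫ s in (0:ℝ)..t, deriv k s * w (t - s) := by
  have hkd : IntervalIntegrable (deriv k) volume 0 t :=
    (hk.continuous_deriv le_rfl).intervalIntegrable _ _
  have hintegrable : ∀ g : ℝ → ℝ, Continuous g →
      IntervalIntegrable (fun s => deriv k s * g (t - s)) volume 0 t := fun g hg =>
    ((hk.continuous_deriv le_rfl).mul (hg.comp (continuous_sub_left t))).intervalIntegrable _ _
  have hexpand : ∀ s, (w (t - s) - w t - c * (v (t - s) - v t)) * -deriv k s =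
      (w t - c * v t) * deriv k s + c * (deriv k s * v (t - s)) - deriv k s * w (t - s) :=
    fun s => by ring
  simp only [hexpand]
  rw [integral_sub ((hkd.const_mul _).add ((hintegrable v hv).const_mul _)) (hintegrable w hw),
    integral_add (hkd.const_mul _) ((hintegrable v hv).const_mul _),
    intervalIntegral.integral_const_mul, intervalIntegral.integral_const_mul,
    integral_deriv_eq_sub (fun x _ => hk.differentiable one_ne_zero x) hkd]

theorem fundamental_identity_general (T : ℝ) (k u H : ℝ → ℝ)
    (hk : ContDiff ℝ 1 k) (hu : ContDiff ℝ 1 u) (hH : ContDiff ℝ 1 H) :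
    ∀ t ∈ Set.Ioc (0:ℝ) T,
      deriv H (u t) * deriv (fun r => ∫ τ in (0:ℝ)..r, k (r - τ) * u τ) t =
        deriv (fun r => ∫ τ in (0:ℝ)..r, k (r - τ) * H (u τ)) t +
          (-H (u t) + deriv H (u t) * u t) * k t +
          ∫ s in (0:ℝ)..t,
            (H (u (t - s)) - H (u t) - deriv H (u t) * (u (t - s) - u t)) *
              (-(deriv k s)) := by
  intro t _
  have huc := hu.continuous
  have hHuc : Continuous fun τ => H (u τ) := hH.continuous.comp huc
  rw [(hasDerivAt_integral_comp_sub_mul hk huc t).deriv,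
    (hasDerivAt_integral_comp_sub_mul hk hHuc t).deriv,
    integral_sub_sub_mul_neg_deriv (w := fun τ => H (u τ)) hk huc hHuc]
  ring

/-- Fundamental identity for integro-differential operators of the form
`d/dt (k ∗ u)`, for continuously differentiable `k`, `u` and `H`. -/
theorem fundamental_identity (T : ℝ) (hT : 0 < T) (k u H : ℝ → ℝ)
    (hk : ContDiff ℝ 1 k) (hu : ContDiff ℝ 1 u) (hH : ContDiff ℝ 1 H) :
    ∀ t ∈ Set.Ioc (0:ℝ) T,
      deriv H (u t) * deriv (fun r => ∫ τ in (0:ℝ)..r, k (r - τ) * u τ) t =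
        deriv (fun r => ∫ τ in (0:ℝ)..r, k (r - τ) * H (u τ)) t +
          (-H (u t) + deriv H (u t) * u t) * k t +
          ∫ s in (0:ℝ)..t,
            (H (u (t - s)) - H (u t) - deriv H (u t) * (u (t - s) - u t)) *
              (-(deriv k s)) :=
  fundamental_identity_general T k u H hk hu hH
end

section
/- Let T>0, let k:[0,T]→ℝ be continuously differentiable and nonincreasing, let H∈C¹(ℝ) be convex, and let u:[0,T]→ℝ be continuously differentiable. Then for every t∈(0,T] one has H'(u(t))·(d/dt)(k∗u)(t) ≥ (d/dt)(k∗(H∘u))(t) + (H'(u(t))u(t) − H(u(t)))·k(t). -/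
/-!
Put `c = H'(u(t))` and `φ = c • u - H ∘ u`. By the Leibniz rule `(k ∗ φ)' = k(0) φ + k' ∗ φ`
and `∫₀ᵗ k'(t - τ) dτ = k(t) - k(0)`, the difference of the two sides of the inequality is
`(k ∗ φ)'(t) - φ(t) k(t) = ∫₀ᵗ k'(t - τ) (φ(τ) - φ(t)) dτ`. Convexity of `H` (the tangent line
at `u(t)` lies below its graph) makes `τ = t` a maximum of `φ`, and `k' ≤ 0` since `k` is
nonincreasing, so the integrand is a product of two nonpositive factors.
-/

open MeasureTheory intervalIntegral Set

theorem ConvexOn.add_deriv_mul_sub_le {S : Set ℝ} {f : ℝ → ℝ} (hf : ConvexOn ℝ S f) {x y : ℝ}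
    (hx : x ∈ S) (hy : y ∈ S) (hd : DifferentiableAt ℝ f x) :
    f x + deriv f x * (y - x) ≤ f y := by
  rcases lt_trichotomy x y with hxy | rfl | hxy
  · have := hf.deriv_le_slope hx hy hxy hd
    rw [slope_def_field, le_div_iff₀ (sub_pos.2 hxy)] at this
    linarith
  · simp
  · have := hf.slope_le_deriv hy hx hxy hd
    rw [slope_def_field, div_le_iff₀ (sub_pos.2 hxy)] at this
    linarith

theorem AntitoneOn.deriv_nonpos_of_mem_Icc {f : ℝ → ℝ} {a b x : ℝ} (hf : AntitoneOn f (Icc a b))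
    (hab : a < b) (hx : x ∈ Icc a b) (hd : DifferentiableAt ℝ f x) : deriv f x ≤ 0 := by
  rw [← hd.derivWithin (uniqueDiffOn_Icc hab x hx)]
  exact hf.derivWithin_nonpos

theorem integral_deriv_comp_sub {k : ℝ → ℝ} (hk : ContDiff ℝ 1 k) (t : ℝ) :
    ∫ τ in (0:ℝ)..t, deriv k (t - τ) = k t - k 0 := by
  rw [intervalIntegral.integral_comp_sub_left (deriv k), sub_self, sub_zero,
    integral_deriv_eq_sub (fun x _ => hk.differentiable one_ne_zero x)
      ((hk.continuous_deriv le_rfl).intervalIntegrable _ _)]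

theorem hasDerivAt_intervalIntegral_comp_sub_mul {k v : ℝ → ℝ} (hk : ContDiff ℝ 1 k)
    (hv : Continuous v) (a b x : ℝ) :
    HasDerivAt (fun x => ∫ τ in a..b, k (x - τ) * v τ)
      (∫ τ in a..b, deriv k (x - τ) * v τ) x := by
  have hk' : Continuous (deriv k) := hk.continuous_deriv le_rfl
  obtain ⟨M, hM⟩ := ((isCompact_closedBall x 1).prod isCompact_uIcc).exists_bound_of_continuousOn
    (f := fun p : ℝ × ℝ => deriv k (p.1 - p.2)) (by fun_prop)
  refine (intervalIntegral.hasDerivAt_integral_of_dominated_loc_of_deriv_le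
    (F := fun y τ => k (y - τ) * v τ) (F' := fun y τ => deriv k (y - τ) * v τ) (μ := volume)
    (bound := fun τ => M * |v τ|) (Metric.ball_mem_nhds x one_pos) ?_ ?_ ?_ ?_ ?_ ?_).2
  · exact .of_forall fun y =>
      (by fun_prop : Continuous fun τ => k (y - τ) * v τ).aestronglyMeasurable
  · exact (by fun_prop : Continuous fun τ => k (x - τ) * v τ).intervalIntegrable _ _
  · exact (by fun_prop : Continuous fun τ => deriv k (x - τ) * v τ).aestronglyMeasurable
  · refine .of_forall fun τ hτ y hy => ?_
    rw [norm_mul, Real.norm_eq_abs (v τ)]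
    exact mul_le_mul_of_nonneg_right
      (hM (y, τ) ⟨Metric.ball_subset_closedBall hy, uIoc_subset_uIcc hτ⟩) (abs_nonneg _)
  · exact (by fun_prop : Continuous fun τ => M * |v τ|).intervalIntegrable _ _
  · refine .of_forall fun τ _ y _ => ?_
    have hkτ := (hk.differentiable one_ne_zero (y - τ)).hasDerivAt.comp y
      ((hasDerivAt_id y).sub_const τ)
    exact (hkτ.mul_const (v τ)).congr_deriv (by simp)

noncomputable def halfConv (k v : ℝ → ℝ) (t : ℝ) : ℝ :=
  ∫ τ in (0:ℝ)..t, k (t - τ) * v τ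

theorem halfConv_const_mul_sub {k v w : ℝ → ℝ} (hk : Continuous k) (hv : Continuous v)
    (hw : Continuous w) (c : ℝ) :
    halfConv k (fun τ => c * v τ - w τ) = fun t => c * halfConv k v t - halfConv k w t := by
  funext t
  rw [halfConv, halfConv, halfConv, ← intervalIntegral.integral_const_mul,
    ← intervalIntegral.integral_sub
      ((by fun_prop : Continuous fun τ => c * (k (t - τ) * v τ)).intervalIntegrable 0 t)
      ((by fun_prop : Continuous fun τ => k (t - τ) * w τ).intervalIntegrable 0 t)]
  exact intervalIntegral.integral_congr fun τ _ => by ring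

theorem hasDerivAt_halfConv {k v : ℝ → ℝ} (hk : ContDiff ℝ 1 k) (hv : Continuous v) (t : ℝ) :
    HasDerivAt (halfConv k v) (k 0 * v t + ∫ τ in (0:ℝ)..t, deriv k (t - τ) * v τ) t := by
  have hk' : Continuous (deriv k) := hk.continuous_deriv le_rfl
  -- `halfConv k v r = f r r`, with `f x y = ∫₀ʸ k(x - τ) v(τ) dτ` having continuous partials
  have hf := hasStrictFDerivAt_uncurry_coprod (u := (t, t))
    (f := fun x y => ∫ τ in (0:ℝ)..y, k (x - τ) * v τ)
    (f₁ := fun x y => (1 : ℝ →L[ℝ] ℝ).smulRight (∫ τ in (0:ℝ)..y, deriv k (x - τ) * v τ))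
    (f₂ := fun x y => (1 : ℝ →L[ℝ] ℝ).smulRight (k (x - y) * v y))
    (.of_forall fun p => (hasDerivAt_intervalIntegral_comp_sub_mul hk hv 0 p.2 p.1).hasFDerivAt)
    (.of_forall fun p => ((by fun_prop : Continuous fun τ => k (p.1 - τ) * v τ)
      |>.integral_hasStrictDerivAt 0 p.2).hasDerivAt.hasFDerivAt)
    (Continuous.continuousAt <| by simp only [Function.HasUncurry.uncurry]; fun_prop)
    (Continuous.continuousAt <| by simp only [Function.HasUncurry.uncurry]; fun_prop)
  have hdiag := hf.hasFDerivAt.comp_hasDerivAt (f := fun r => (r, r)) t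
    ((hasDerivAt_id t).prodMk (hasDerivAt_id t))
  unfold halfConv
  simpa [Function.HasUncurry.uncurry, Function.comp_def, add_comm] using hdiag

theorem mul_le_deriv_halfConv_of_isMaxOn {k φ : ℝ → ℝ} {t : ℝ} (ht : 0 < t)
    (hk : ContDiff ℝ 1 k) (hanti : AntitoneOn k (Icc 0 t)) (hφ : Continuous φ)
    (hmax : IsMaxOn φ (Icc 0 t) t) :
    φ t * k t ≤ deriv (halfConv k φ) t := by
  have hk' : Continuous (deriv k) := hk.continuous_deriv le_rfl
  have hnonneg : 0 ≤ ∫ τ in (0:ℝ)..t, deriv k (t - τ) * (φ τ - φ t) := by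
    refine intervalIntegral.integral_nonneg ht.le fun τ hτ =>
      mul_nonneg_of_nonpos_of_nonpos ?_ (sub_nonpos.2 (hmax hτ))
    exact hanti.deriv_nonpos_of_mem_Icc ht ⟨sub_nonneg.2 hτ.2, by linarith [hτ.1]⟩
      (hk.differentiable one_ne_zero _)
  have hsplit : ∫ τ in (0:ℝ)..t, deriv k (t - τ) * (φ τ - φ t)
      = (∫ τ in (0:ℝ)..t, deriv k (t - τ) * φ τ) - (k t - k 0) * φ t := by
    simp only [mul_sub]
    rw [intervalIntegral.integral_sub
        ((by fun_prop : Continuous fun τ => deriv k (t - τ) * φ τ).intervalIntegrable 0 t)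
        ((by fun_prop : Continuous fun τ => deriv k (t - τ) * φ t).intervalIntegrable 0 t),
      intervalIntegral.integral_mul_const, integral_deriv_comp_sub hk]
  rw [(hasDerivAt_halfConv hk hφ t).deriv]
  linarith

theorem fundamental_inequality_general (T : ℝ) (k u H : ℝ → ℝ)
    (hk : ContDiff ℝ 1 k) (hkmono : AntitoneOn k (Set.Icc 0 T))
    (hu : ContDiff ℝ 1 u) (hH : ContDiff ℝ 1 H)
    (hHconv : ConvexOn ℝ Set.univ H) :
    ∀ t ∈ Set.Ioc (0:ℝ) T,
      deriv H (u t) * deriv (fun r => ∫ τ in (0:ℝ)..r, k (r - τ) * u τ) t ≥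
        deriv (fun r => ∫ τ in (0:ℝ)..r, k (r - τ) * H (u τ)) t +
          (deriv H (u t) * u t - H (u t)) * k t := by
  intro t ht
  set c := deriv H (u t)
  show c * deriv (halfConv k u) t ≥
    deriv (halfConv k fun τ => H (u τ)) t + (c * u t - H (u t)) * k t
  have hHu : Continuous fun τ => H (u τ) := hH.continuous.comp hu.continuous
  have hmax : IsMaxOn (fun τ => c * u τ - H (u τ)) (Icc 0 t) t := fun τ _ => by
    have := hHconv.add_deriv_mul_sub_le (mem_univ (u t)) (mem_univ (u τ))
      (hH.differentiable one_ne_zero _)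
    show c * u τ - H (u τ) ≤ c * u t - H (u t)
    linarith [mul_sub c (u τ) (u t)]
  have hineq := mul_le_deriv_halfConv_of_isMaxOn ht.1 hk
    (hkmono.mono (Icc_subset_Icc_right ht.2)) (by fun_prop) hmax
  have hdu := hasDerivAt_halfConv hk hu.continuous t
  have hdHu := hasDerivAt_halfConv hk hHu t
  rw [halfConv_const_mul_sub hk.continuous hu.continuous hHu,
    ((hdu.const_mul c).fun_sub hdHu).deriv] at hineq
  rw [hdu.deriv, hdHu.deriv]
  linarith

/-- Fundamental inequality for integro-differential operators of the form
`d/dt (k ∗ u)`: if `k` is continuously differentiable and nonincreasing on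
`[0,T]` and `H` is a convex `C¹` function, then for every `t ∈ (0,T]`,
`H'(u(t)) d/dt(k∗u)(t) ≥ d/dt(k∗(H∘u))(t) + (H'(u(t))u(t) − H(u(t))) k(t)`. -/
theorem fundamental_inequality (T : ℝ) (hT : 0 < T) (k u H : ℝ → ℝ)
    (hk : ContDiff ℝ 1 k) (hkmono : AntitoneOn k (Set.Icc 0 T))
    (hu : ContDiff ℝ 1 u) (hH : ContDiff ℝ 1 H)
    (hHconv : ConvexOn ℝ Set.univ H) :
    ∀ t ∈ Set.Ioc (0:ℝ) T,
      deriv H (u t) * deriv (fun r => ∫ τ in (0:ℝ)..r, k (r - τ) * u τ) t ≥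
        deriv (fun r => ∫ τ in (0:ℝ)..r, k (r - τ) * H (u τ)) t +
          (deriv H (u t) * u t - H (u t)) * k t :=
  fundamental_inequality_general T k u H hk hkmono hu hH hHconv
end

section
/- Let T>0 and α∈(0,1). Suppose v:[0,T]→ℝ is continuously differentiable with v(0)=0, and φ∈C¹([0,T]). Then for almost all t∈(0,T) one has (g_α∗(φ v'))(t) = φ(t)·(g_α∗v')(t) + ∫₀^t v(σ)·∂_σ( g_α(t−σ)[φ(t)−φ(σ)] ) dσ. -/
open MeasureTheory intervalIntegral

/-- The Riemann–Liouville kernel `g_β(t) = t^(β-1)/Γ(β)`. -/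
noncomputable def RLkernel (β t : ℝ) : ℝ := t ^ (β - 1) / Real.Gamma β

/-! Fix `t` and put `F(σ) = g_α(t - σ) (φ(t) - φ(σ))`. Writing `φ(t) - φ(σ) = (t - σ) q(σ)` with
`q = dslope φ t` continuous, `F(σ) = (t - σ)^α q(σ) / Γ(α)` is continuous up to `σ = t`, where it
vanishes, and `F'(σ) = g_α(t - σ) ((1 - α) q(σ) - φ'(σ))` is the integrable kernel times a
continuous function. So `∫₀ᵗ (v' F + v F') = v(t) F(t) - v(0) F(0) = 0`, and expanding
`v' F = φ(t) g_α(t - ·) v' - g_α(t - ·) φ v'` gives the identity, in fact for every `t > 0`. -/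

open Set

section dslope

variable {𝕜 : Type*} [NontriviallyNormedField 𝕜]

theorem Differentiable.continuous_dslope {E : Type*} [NormedAddCommGroup E] [NormedSpace 𝕜 E]
    {f : 𝕜 → E} (hf : Differentiable 𝕜 f) (a : 𝕜) : Continuous (dslope f a) :=
  continuousOn_univ.1 <| (continuousOn_dslope Filter.univ_mem).2 ⟨hf.continuous.continuousOn, hf a⟩

theorem sub_eq_sub_mul_dslope (f : 𝕜 → 𝕜) (a b : 𝕜) : f a - f b = (a - b) * dslope f a b := by
  have h := sub_smul_dslope f a b
  rw [smul_eq_mul] at h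
  linear_combination h

end dslope

section RLkernel

variable {α a t σ : ℝ}

theorem RLkernel_mul_self (hα : 0 < α) {s : ℝ} (hs : 0 ≤ s) :
    RLkernel α s * s = s ^ α / Real.Gamma α := by
  rcases hs.eq_or_lt with rfl | hs
  · simp [Real.zero_rpow hα.ne']
  · rw [RLkernel, div_mul_eq_mul_div, ← Real.rpow_add_one hs.ne', sub_add_cancel]

theorem intervalIntegrable_RLkernel_sub_mul (hα : 0 < α) {f : ℝ → ℝ}
    (hf : ContinuousOn f (uIcc a t)) :
    IntervalIntegrable (fun σ => RLkernel α (t - σ) * f σ) volume a t := by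
  have hr : -1 < α - 1 := by linarith
  have h := (intervalIntegrable_rpow' (a := 0) (b := t - a) hr).comp_sub_left t
  simp only [sub_zero, sub_sub_cancel] at h
  exact (h.symm.div_const _).mul_continuousOn hf

theorem RLkernel_sub_mul_sub_eq (hα : 0 < α) (φ : ℝ → ℝ) (hσ : σ ≤ t) :
    RLkernel α (t - σ) * (φ t - φ σ) = (t - σ) ^ α / Real.Gamma α * dslope φ t σ := by
  rw [sub_eq_sub_mul_dslope, ← mul_assoc, RLkernel_mul_self hα (sub_nonneg.2 hσ)]

theorem continuousOn_RLkernel_sub_mul_sub (hα : 0 < α) {φ : ℝ → ℝ} (hφ : Differentiable ℝ φ) :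
    ContinuousOn (fun σ => RLkernel α (t - σ) * (φ t - φ σ)) (Iic t) := by
  refine ContinuousOn.congr (f := fun σ => (t - σ) ^ α / Real.Gamma α * dslope φ t σ) ?_
    fun σ hσ => RLkernel_sub_mul_sub_eq hα φ hσ
  refine (Continuous.mul ?_ (hφ.continuous_dslope t)).continuousOn
  exact ((continuous_const.sub continuous_id).rpow_const fun _ => Or.inr hα.le).div_const _

theorem hasDerivAt_RLkernel_sub_mul_sub {φ : ℝ → ℝ} (hφ : DifferentiableAt ℝ φ σ) (hσ : σ < t) :
    HasDerivAt (fun σ' => RLkernel α (t - σ') * (φ t - φ σ'))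
      (RLkernel α (t - σ) * ((1 - α) * dslope φ t σ - deriv φ σ)) σ := by
  have hpos : 0 < t - σ := sub_pos.2 hσ
  have hkernel : HasDerivAt (fun σ' => RLkernel α (t - σ'))
      (-(α - 1) * (t - σ) ^ (α - 1 - 1) / Real.Gamma α) σ := by
    have := (((hasDerivAt_id σ).const_sub t).rpow_const (p := α - 1) (Or.inl hpos.ne')).div_const
      (Real.Gamma α)
    simpa only [RLkernel, neg_sub, id_eq, mul_comm, mul_neg, one_mul] using this
  refine (hkernel.mul (hφ.hasDerivAt.const_sub (φ t))).congr_deriv ?_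
  rw [sub_eq_sub_mul_dslope φ t σ, RLkernel]
  have hpow : (t - σ) ^ (α - 1 - 1) * (t - σ) = (t - σ) ^ (α - 1) := by
    rw [← Real.rpow_add_one hpos.ne', sub_add_cancel]
  linear_combination (-(α - 1) / Real.Gamma α * dslope φ t σ) * hpow

theorem integral_RLkernel_sub_mul_mul_deriv (hα : 0 < α) (hat : a ≤ t) {v φ : ℝ → ℝ}
    (hv : ContDiff ℝ 1 v) (hva : v a = 0) (hφ : ContDiff ℝ 1 φ) :
    (∫ σ in a..t, RLkernel α (t - σ) * (φ σ * deriv v σ)) =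
      φ t * (∫ σ in a..t, RLkernel α (t - σ) * deriv v σ) +
        ∫ σ in a..t, v σ * deriv (fun σ' => RLkernel α (t - σ') * (φ t - φ σ')) σ := by
  set F := fun σ' => RLkernel α (t - σ') * (φ t - φ σ')
  set G := fun σ => RLkernel α (t - σ) * ((1 - α) * dslope φ t σ - deriv φ σ)
  have hvd : Differentiable ℝ v := hv.differentiable one_ne_zero
  have hφd : Differentiable ℝ φ := hφ.differentiable one_ne_zero
  have hv' : Continuous (deriv v) := hv.continuous_deriv le_rfl
  have hF' : ∀ σ ∈ Ioo a t, HasDerivAt F (G σ) σ := fun σ hσ =>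
    hasDerivAt_RLkernel_sub_mul_sub (hφd σ) hσ.2
  have hF : ContinuousOn F (Icc a t) :=
    (continuousOn_RLkernel_sub_mul_sub hα hφd).mono Icc_subset_Iic_self
  have hv'F : IntervalIntegrable (fun σ => deriv v σ * F σ) volume a t :=
    (hv'.continuousOn.mul hF).intervalIntegrable_of_Icc hat
  have hvG : IntervalIntegrable (fun σ => v σ * G σ) volume a t := by
    have hcont : Continuous fun σ => v σ * ((1 - α) * dslope φ t σ - deriv φ σ) :=
      hvd.continuous.mul ((continuous_const.mul (hφd.continuous_dslope t)).sub
        (hφ.continuous_deriv le_rfl))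
    refine (intervalIntegrable_RLkernel_sub_mul hα hcont.continuousOn).congr fun σ _ => ?_
    simp only [G]
    ring
  have hparts : (∫ σ in a..t, deriv v σ * F σ) + ∫ σ in a..t, v σ * G σ = 0 := by
    rw [← intervalIntegral.integral_add hv'F hvG, integral_eq_sub_of_hasDeriv_right_of_le hat
      (hvd.continuous.continuousOn.mul hF)
      (fun σ hσ => ((hvd σ).hasDerivAt.mul (hF' σ hσ)).hasDerivWithinAt) (hv'F.add hvG)]
    simp [F, hva]
  have hderiv : (∫ σ in a..t, v σ * deriv F σ) = ∫ σ in a..t, v σ * G σ :=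
    integral_congr_Ioo_of_le hat fun σ hσ => by rw [(hF' σ hσ).deriv]
  have hv'F_eq : (∫ σ in a..t, deriv v σ * F σ) =
      φ t * (∫ σ in a..t, RLkernel α (t - σ) * deriv v σ) -
        ∫ σ in a..t, RLkernel α (t - σ) * (φ σ * deriv v σ) := by
    rw [← intervalIntegral.integral_const_mul, ← intervalIntegral.integral_sub
      ((intervalIntegrable_RLkernel_sub_mul hα hv'.continuousOn).const_mul _)
      (intervalIntegrable_RLkernel_sub_mul hα (f := fun σ => φ σ * deriv v σ)
        (hφd.continuous.mul hv').continuousOn)]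
    refine integral_congr fun σ _ => ?_
    simp only [F]
    ring
  linarith

end RLkernel

theorem RL_commutation_general (T α : ℝ) (hα : α ∈ Set.Ioo (0:ℝ) 1)
    (v φ : ℝ → ℝ) (hv : ContDiff ℝ 1 v) (hv0 : v 0 = 0)
    (hφ : ContDiff ℝ 1 φ) :
    ∀ᵐ t ∂(volume.restrict (Set.Ioo (0:ℝ) T)),
      (∫ σ in (0:ℝ)..t, RLkernel α (t - σ) * (φ σ * deriv v σ)) =
        φ t * (∫ σ in (0:ℝ)..t, RLkernel α (t - σ) * deriv v σ) +
          ∫ σ in (0:ℝ)..t,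
            v σ * deriv (fun σ' => RLkernel α (t - σ') * (φ t - φ σ')) σ := by
  filter_upwards [ae_restrict_mem measurableSet_Ioo] with t ht
  exact integral_RLkernel_sub_mul_mul_deriv hα.1 ht.1.le hv hv0 hφ

/-- Commutation identity for the Riemann–Liouville kernel:
`(g_α ∗ (φ v'))(t) = φ(t)(g_α ∗ v')(t) + ∫₀ᵗ v(σ) ∂_σ(g_α(t-σ)[φ(t)-φ(σ)]) dσ`
for a.a. `t ∈ (0,T)`. -/
theorem RL_commutation (T α : ℝ) (hT : 0 < T) (hα : α ∈ Set.Ioo (0:ℝ) 1)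
    (v φ : ℝ → ℝ) (hv : ContDiff ℝ 1 v) (hv0 : v 0 = 0)
    (hφ : ContDiff ℝ 1 φ) :
    ∀ᵐ t ∂(volume.restrict (Set.Ioo (0:ℝ) T)),
      (∫ σ in (0:ℝ)..t, RLkernel α (t - σ) * (φ σ * deriv v σ)) =
        φ t * (∫ σ in (0:ℝ)..t, RLkernel α (t - σ) * deriv v σ) +
          ∫ σ in (0:ℝ)..t,
            v σ * deriv (fun σ' => RLkernel α (t - σ') * (φ t - φ σ')) σ :=
  RL_commutation_general T α hα v φ hv hv0 hφ
end

section
/- Let T>0 and α∈(0,1). Suppose v:[0,T]→ℝ is continuously differentiable, nonnegative, and v(0)=0, and φ∈C¹([0,T]) is nondecreasing. Then for almost all t∈(0,T) one has (g_α∗(φ v'))(t) ≥ φ(t)·(g_α∗v')(t) − ∫₀^t g_α(t−σ)·φ'(σ)·v(σ) dσ. -/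
open MeasureTheory intervalIntegral

/-!
Fix `t` and put `K σ = g_α (t - σ)`: it is integrable on `[0, t]` and, since `α < 1`, smooth and
nondecreasing on `[0, t)`. Let `H(s)` be the difference of the two sides of the inequality with
`t` replaced by `s` in the upper limits and in `φ(t)` (the kernel `K` stays fixed). Then
`H(0) = 0` and `H'(s) = φ'(s) (K(s) v(s) - ∫₀ˢ K v')` for `0 < s < t`. Integrating by parts,
`∫₀ˢ K v' = K(s) v(s) - ∫₀ˢ K' v ≤ K(s) v(s)` because `v(0) = 0`, `v ≥ 0` and `K' ≥ 0`. So `H` is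
nondecreasing on `[0, t]`, and `H(t) ≥ 0` is the claim.
-/

open Set

theorem intervalIntegrable_RLkernel_sub {β : ℝ} (hβ : 0 < β) (t a b : ℝ) :
    IntervalIntegrable (fun σ => RLkernel β (t - σ)) volume a b := by
  have h := ((intervalIntegrable_rpow' (a := t - a) (b := t - b)
    (by linarith : -1 < β - 1)).comp_sub_left t).div_const (Real.Gamma β)
  simpa only [RLkernel, sub_sub_cancel] using h

theorem hasDerivAt_RLkernel_sub (β : ℝ) {t σ : ℝ} (hσ : σ < t) :
    HasDerivAt (fun σ => RLkernel β (t - σ)) ((1 - β) * (t - σ) ^ (β - 2) / Real.Gamma β) σ := by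
  exact (((Real.hasDerivAt_rpow_const (p := β - 1) (Or.inl (sub_pos.2 hσ).ne')).comp σ
    ((hasDerivAt_id σ).const_sub t)).div_const (Real.Gamma β)).congr_deriv
    (by rw [show β - 2 = β - 1 - 1 by ring]; ring)

theorem hasDerivAt_integral_of_continuousOn_Ioo {f : ℝ → ℝ} {a b s : ℝ}
    (hf : IntervalIntegrable f volume a b) (hfc : ContinuousOn f (Ioo a b)) (hs : s ∈ Ioo a b) :
    HasDerivAt (fun u => ∫ x in a..u, f x) (f s) s :=
  integral_hasDerivAt_right
    (hf.mono_set (uIcc_subset_uIcc_left (Icc_subset_uIcc (Ioo_subset_Icc_self hs))))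
    (hfc.stronglyMeasurableAtFilter isOpen_Ioo s hs) (hfc.continuousAt (isOpen_Ioo.mem_nhds hs))

theorem integral_mul_deriv_le_of_hasDerivAt_nonneg {K K' v v' : ℝ → ℝ} {a b : ℝ} (hab : a ≤ b)
    (hK : ∀ x ∈ Icc a b, HasDerivAt K (K' x) x) (hK' : ∀ x ∈ Icc a b, 0 ≤ K' x)
    (hv : ∀ x ∈ Icc a b, HasDerivAt v (v' x) x) (hv' : IntervalIntegrable v' volume a b)
    (hv_nonneg : ∀ x ∈ Icc a b, 0 ≤ v x) :
    ∫ x in a..b, K x * v' x ≤ K b * v b - K a * v a := by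
  rw [← uIcc_of_le hab] at hK hv
  have hKmono : MonotoneOn K (uIcc a b) := by
    rw [uIcc_of_le hab] at hK ⊢
    refine monotoneOn_of_hasDerivWithinAt_nonneg (convex_Icc a b)
      (fun x hx => (hK x hx).continuousAt.continuousWithinAt)
      (fun x hx => (hK x (interior_subset hx)).hasDerivWithinAt)
      (fun x hx => hK' x (interior_subset hx))
  have hK'int : IntervalIntegrable K' volume a b :=
    hKmono.intervalIntegrable_deriv.congr_ae <| ae_restrict_of_forall_mem measurableSet_uIoc
      fun x hx => (hK x (uIoc_subset_uIcc hx)).deriv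
  have hK'v : 0 ≤ ∫ x in a..b, K' x * v x :=
    integral_nonneg hab fun x hx => mul_nonneg (hK' x hx) (hv_nonneg x hx)
  rw [integral_mul_deriv_eq_deriv_mul hK hv hK'int hv']
  linarith

section CommutationDefect

variable {K φ v : ℝ → ℝ} {a b : ℝ}

noncomputable def commutationDefect (K φ v : ℝ → ℝ) (a s : ℝ) : ℝ :=
  (∫ x in a..s, K x * (φ x * deriv v x)) - φ s * (∫ x in a..s, K x * deriv v x) +
    ∫ x in a..s, K x * (deriv φ x * v x)

@[simp] theorem commutationDefect_self (K φ v : ℝ → ℝ) (a : ℝ) :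
    commutationDefect K φ v a a = 0 := by
  simp [commutationDefect]

theorem continuousOn_commutationDefect (hab : a ≤ b) (hKint : IntervalIntegrable K volume a b)
    (hφ : ContDiff ℝ 1 φ) (hv : ContDiff ℝ 1 v) :
    ContinuousOn (commutationDefect K φ v a) (Icc a b) := by
  have hprim {g : ℝ → ℝ} (hg : Continuous g) :
      ContinuousOn (fun s => ∫ x in a..s, K x * g x) (Icc a b) := by
    rw [← uIcc_of_le hab]
    exact continuousOn_primitive_interval' (hKint.mul_continuousOn hg.continuousOn) left_mem_uIcc
  have hφc := hφ.continuous
  have hv'c := hv.continuous_deriv le_rfl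
  exact ((hprim (hφc.mul hv'c)).sub (hφc.continuousOn.mul (hprim hv'c))).add
    (hprim ((hφ.continuous_deriv le_rfl).mul hv.continuous))

theorem hasDerivAt_commutationDefect (hKint : IntervalIntegrable K volume a b)
    (hKc : ContinuousOn K (Ioo a b)) (hφ : ContDiff ℝ 1 φ) (hv : ContDiff ℝ 1 v) {s : ℝ}
    (hs : s ∈ Ioo a b) :
    HasDerivAt (commutationDefect K φ v a)
      (deriv φ s * (K s * v s - ∫ x in a..s, K x * deriv v x)) s := by
  have hprim {g : ℝ → ℝ} (hg : Continuous g) :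
      HasDerivAt (fun s => ∫ x in a..s, K x * g x) (K s * g s) s :=
    hasDerivAt_integral_of_continuousOn_Ioo (hKint.mul_continuousOn hg.continuousOn)
      (hKc.mul hg.continuousOn) hs
  have hφc := hφ.continuous
  have hv'c := hv.continuous_deriv le_rfl
  exact (((hprim (hφc.mul hv'c)).sub ((hφ.differentiable one_ne_zero s).hasDerivAt.mul
    (hprim hv'c))).add (hprim ((hφ.continuous_deriv le_rfl).mul hv.continuous))).congr_deriv
    (by simp only [Pi.mul_apply]; ring)

theorem commutationDefect_nonneg {K' : ℝ → ℝ} (hab : a ≤ b)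
    (hKint : IntervalIntegrable K volume a b)
    (hK : ∀ x ∈ Ico a b, HasDerivAt K (K' x) x) (hK' : ∀ x ∈ Ico a b, 0 ≤ K' x)
    (hφ : ContDiff ℝ 1 φ) (hφ' : ∀ x ∈ Ioo a b, 0 ≤ deriv φ x)
    (hv : ContDiff ℝ 1 v) (hv_nonneg : ∀ x ∈ Ico a b, 0 ≤ v x) (hva : v a = 0) :
    0 ≤ commutationDefect K φ v a b := by
  have hKc : ContinuousOn K (Ioo a b) := fun x hx =>
    (hK x (Ioo_subset_Ico_self hx)).continuousAt.continuousWithinAt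
  have hderiv_nonneg (s : ℝ) (hs : s ∈ Ioo a b) :
      0 ≤ deriv φ s * (K s * v s - ∫ x in a..s, K x * deriv v x) := by
    have hsub : Icc a s ⊆ Ico a b := Icc_subset_Ico_right hs.2
    have hIBP := integral_mul_deriv_le_of_hasDerivAt_nonneg hs.1.le (fun x hx => hK x (hsub hx))
      (fun x hx => hK' x (hsub hx)) (fun x _ => (hv.differentiable one_ne_zero x).hasDerivAt)
      ((hv.continuous_deriv le_rfl).intervalIntegrable a s) (fun x hx => hv_nonneg x (hsub hx))
    rw [hva, mul_zero, sub_zero] at hIBP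
    exact mul_nonneg (hφ' s hs) (sub_nonneg.2 hIBP)
  have hmono : MonotoneOn (commutationDefect K φ v a) (Icc a b) :=
    monotoneOn_of_hasDerivWithinAt_nonneg (convex_Icc a b)
      (continuousOn_commutationDefect hab hKint hφ hv)
      (fun s hs => (hasDerivAt_commutationDefect hKint hKc hφ hv
        (by rwa [interior_Icc] at hs)).hasDerivWithinAt)
      (fun s hs => hderiv_nonneg s (by rwa [interior_Icc] at hs))
  simpa using hmono (left_mem_Icc.2 hab) (right_mem_Icc.2 hab) hab

end CommutationDefect

theorem RL_commutation_ineq_general (T α : ℝ) (hα : α ∈ Set.Ioo (0:ℝ) 1)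
    (v φ : ℝ → ℝ) (hv : ContDiff ℝ 1 v) (hvpos : ∀ t ∈ Set.Icc (0:ℝ) T, 0 ≤ v t)
    (hv0 : v 0 = 0) (hφ : ContDiff ℝ 1 φ)
    (hφmono : MonotoneOn φ (Set.Icc 0 T)) :
    ∀ᵐ t ∂(volume.restrict (Set.Ioo (0:ℝ) T)),
      (∫ σ in (0:ℝ)..t, RLkernel α (t - σ) * (φ σ * deriv v σ)) ≥
        φ t * (∫ σ in (0:ℝ)..t, RLkernel α (t - σ) * deriv v σ) -
          ∫ σ in (0:ℝ)..t, RLkernel α (t - σ) * deriv φ σ * v σ := by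
  obtain ⟨hα0, hα1⟩ := hα
  rw [ae_restrict_iff' measurableSet_Ioo]
  refine .of_forall fun t ⟨ht0, htT⟩ => ?_
  have hφ' : ∀ σ ∈ Ioo 0 t, 0 ≤ deriv φ σ := fun σ hσ => by
    rw [← derivWithin_of_isOpen isOpen_Ioo hσ]
    exact (hφmono.mono (Ioo_subset_Icc_self.trans (Icc_subset_Icc_right htT.le))).derivWithin_nonneg
  have hK' : ∀ σ ∈ Ico 0 t, 0 ≤ (1 - α) * (t - σ) ^ (α - 2) / Real.Gamma α := fun σ hσ =>
    div_nonneg (mul_nonneg (by linarith) (Real.rpow_nonneg (by linarith [hσ.2]) _))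
      (Real.Gamma_pos_of_pos hα0).le
  have h := commutationDefect_nonneg ht0.le (intervalIntegrable_RLkernel_sub hα0 t 0 t)
      (fun σ hσ => hasDerivAt_RLkernel_sub α hσ.2) hK' hφ hφ' hv
      (fun σ hσ => hvpos σ ⟨hσ.1, hσ.2.le.trans htT.le⟩) hv0
  simp only [commutationDefect, mul_assoc] at h ⊢
  linarith

/-- Commutation inequality for the Riemann–Liouville kernel: if `v ≥ 0`,
`v(0)=0` and `φ` is nondecreasing, then for a.a. `t ∈ (0,T)`,
`(g_α ∗ (φ v'))(t) ≥ φ(t)(g_α ∗ v')(t) − ∫₀ᵗ g_α(t-σ) φ'(σ) v(σ) dσ`. -/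
theorem RL_commutation_ineq (T α : ℝ) (hT : 0 < T) (hα : α ∈ Set.Ioo (0:ℝ) 1)
    (v φ : ℝ → ℝ) (hv : ContDiff ℝ 1 v) (hvpos : ∀ t ∈ Set.Icc (0:ℝ) T, 0 ≤ v t)
    (hv0 : v 0 = 0) (hφ : ContDiff ℝ 1 φ)
    (hφmono : MonotoneOn φ (Set.Icc 0 T)) :
    ∀ᵐ t ∂(volume.restrict (Set.Ioo (0:ℝ) T)),
      (∫ σ in (0:ℝ)..t, RLkernel α (t - σ) * (φ σ * deriv v σ)) ≥
        φ t * (∫ σ in (0:ℝ)..t, RLkernel α (t - σ) * deriv v σ) -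
          ∫ σ in (0:ℝ)..t, RLkernel α (t - σ) * deriv φ σ * v σ :=
  RL_commutation_ineq_general T α hα v φ hv hvpos hv0 hφ hφmono
end
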